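/- Let Y₁ and Y₂ be two channels with common finite input alphabet X. Then Y₂ is less noisy than Y₁ (i.e., I(U;Y₂) ≥ I(U;Y₁) for all Markov chains U → X → (Y₁,Y₂)) if and only if the function p(x) ↦ I(X;Y₁) - I(X;Y₂) is convex on the simplex of input distributions. -/

import Mathlib

/-
For a Markov chain `U → X → Y` with `P(U = u) = w u` and `P(X | U = u) = z u`, the chain rule
gives `I(U;Y) = I(X;Y) - I(X;Y|U)`, and `I(X;Y|U) = ∑ u, w u * I(X;Y)(z u)`. Hence, writing
`F p = I(X;Y₁)(p) - I(X;Y₂)(p)`,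
  `I(U;Y₁) - I(U;Y₂) = F (∑ u, w u • z u) - ∑ u, w u * F (z u)`,
which is minus the Jensen gap of `F` at the mixture. So `Y₂` is less noisy than `Y₁` exactly when
Jensen's inequality holds for `F` at every finite mixture; two-point mixtures already give
convexity, and conversely every input law `q` on `U × X` is such a mixture.
-/

open Real

/-- Mutual information (in bits) of a joint pmf `q` on a product of finite alphabets,
with the conventions `log 0 = 0`, `x / 0 = 0`. -/
noncomputable def mutualInfo {A B : Type*} [Fintype A] [Fintype B] (q : A → B → ℝ) : ℝ :=
  ∑ a, ∑ b, q a b * Real.logb 2 (q a b / ((∑ b', q a b') * (∑ a', q a' b)))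

/-- Conditional mutual information `I(A;B|U)` (in bits) of a joint pmf `r` on `U × A × B`. -/
noncomputable def condMutualInfo {U A B : Type*} [Fintype U] [Fintype A] [Fintype B]
    (r : U → A → B → ℝ) : ℝ :=
  ∑ u, ∑ a, ∑ b, r u a b *
    Real.logb 2 ((r u a b * (∑ a', ∑ b', r u a' b')) / ((∑ b', r u a b') * (∑ a', r u a' b)))

open Finset

theorem exists_mul_stdSimplex {U X : Type*} [Fintype X] [Nonempty X] (q : U → X → ℝ)
    (hq : ∀ u x, 0 ≤ q u x) :
    ∃ (w : U → ℝ) (z : U → X → ℝ), (∀ u, 0 ≤ w u) ∧ (∀ u, z u ∈ stdSimplex ℝ X) ∧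
      q = fun u x => w u * z u x := by
  classical
  have (u : U) : ∃ p ∈ stdSimplex ℝ X, ∀ x, q u x = (∑ x', q u x') * p x := by
    rcases (sum_nonneg fun x _ => hq u x : 0 ≤ ∑ x', q u x').eq_or_lt with h0 | hpos
    · refine ⟨Pi.single (Classical.arbitrary X) 1, single_mem_stdSimplex ℝ _, fun x => ?_⟩
      rw [← h0, zero_mul]
      exact (sum_eq_zero_iff_of_nonneg fun x _ => hq u x).1 h0.symm x (mem_univ x)
    · refine ⟨fun x => q u x / ∑ x', q u x',
        ⟨fun x => div_nonneg (hq u x) hpos.le, by rw [← sum_div, div_self hpos.ne']⟩,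
        fun x => (mul_div_cancel₀ _ hpos.ne').symm⟩
  choose z hz hqz using this
  exact ⟨fun u => ∑ x, q u x, z, fun u => sum_nonneg fun x _ => hq u x, hz, funext₂ hqz⟩

variable {U X Y : Type*} [Fintype U] [Fintype X] [Fintype Y]

theorem mutualInfo_eq_sub_condMutualInfo (q : U → X → ℝ) (W : X → Y → ℝ)
    (hq : ∀ u x, 0 ≤ q u x) (hW : ∀ x y, 0 ≤ W x y) (hWs : ∀ x, ∑ y, W x y = 1) :
    mutualInfo (fun u y => ∑ x, q u x * W x y)
      = mutualInfo (fun x y => (∑ u, q u x) * W x y)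
        - condMutualInfo (fun u x y => q u x * W x y) := by
  have hrow : ∀ x c, ∑ y, c * W x y = c := fun x c => by rw [← mul_sum, hWs, mul_one]
  have hUY : ∀ u, ∑ y, ∑ x, q u x * W x y = ∑ x, q u x := fun u => by
    rw [sum_comm]; simp only [hrow]
  have hY : ∀ y, ∑ u, ∑ x, q u x * W x y = ∑ x, (∑ u, q u x) * W x y := fun y => by
    rw [sum_comm]; simp only [sum_mul]
  have hUYX : ∀ L : U → Y → ℝ, ∑ u, ∑ y, (∑ x, q u x * W x y) * L u y
      = ∑ u, ∑ x, ∑ y, q u x * W x y * L u y :=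
    fun L => sum_congr rfl fun u _ => (sum_congr rfl fun y _ => sum_mul _ _ _).trans sum_comm
  have hXY : ∀ L : X → Y → ℝ, ∑ x, ∑ y, (∑ u, q u x) * W x y * L x y
      = ∑ u, ∑ x, ∑ y, q u x * W x y * L x y := fun L => by
    simp only [sum_mul]
    exact (sum_congr rfl fun x _ => sum_comm).trans sum_comm
  rw [eq_sub_iff_add_eq]
  simp only [mutualInfo, condMutualInfo, hrow, hUY, hY]
  rw [hUYX, hXY, ← sum_add_distrib]
  refine sum_congr rfl fun u _ => ?_
  rw [← sum_add_distrib]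
  refine sum_congr rfl fun x _ => ?_
  rw [← sum_add_distrib]
  refine sum_congr rfl fun y _ => ?_
  rw [← mul_add]
  -- On the support of `q u x * W x y` every marginal is positive, so the logarithms combine.
  rcases (mul_nonneg (hq u x) (hW x y)).eq_or_lt with h0 | hpos
  · rw [← h0, zero_mul, zero_mul]
  have hqux : 0 < q u x := pos_of_mul_pos_left hpos (hW x y)
  have hWxy : 0 < W x y := pos_of_mul_pos_right hpos (hq u x)
  have hpU : 0 < ∑ x, q u x := sum_pos' (fun x _ => hq u x) ⟨x, mem_univ x, hqux⟩
  have hpX : 0 < ∑ u, q u x := sum_pos' (fun u _ => hq u x) ⟨u, mem_univ u, hqux⟩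
  have hqY : 0 < ∑ x, q u x * W x y :=
    sum_pos' (fun x _ => mul_nonneg (hq u x) (hW x y)) ⟨x, mem_univ x, hpos⟩
  have hpY : 0 < ∑ x, (∑ u, q u x) * W x y :=
    sum_pos' (fun x _ => mul_nonneg (sum_nonneg fun u _ => hq u x) (hW x y))
      ⟨x, mem_univ x, mul_pos hpX hWxy⟩
  rw [← logb_mul (by positivity) (by positivity)]
  congr 2
  field_simp

theorem condMutualInfo_eq_sum_mul_mutualInfo (w : U → ℝ) (z : U → X → ℝ) (W : X → Y → ℝ)
    (hw : ∀ u, 0 ≤ w u) (hz : ∀ u, ∑ x, z u x = 1) (hWs : ∀ x, ∑ y, W x y = 1) :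
    condMutualInfo (fun u x y => w u * z u x * W x y)
      = ∑ u, w u * mutualInfo (fun x y => z u x * W x y) := by
  have hrow : ∀ x c, ∑ y, c * W x y = c := fun x c => by rw [← mul_sum, hWs, mul_one]
  simp only [condMutualInfo, mutualInfo]
  refine sum_congr rfl fun u _ => ?_
  rcases (hw u).eq_or_lt with hwu | hwu
  · simp [← hwu]
  have hmass : ∑ x, w u * z u x = w u := by rw [← mul_sum, hz u, mul_one]
  have hcol : ∀ y, ∑ x, w u * z u x * W x y = w u * ∑ x, z u x * W x y := fun y => by
    simp only [mul_sum, mul_assoc]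
  simp only [hrow, hmass, hcol]
  rw [mul_sum]
  refine sum_congr rfl fun x _ => ?_
  rw [mul_sum]
  refine sum_congr rfl fun y _ => ?_
  have hratio : w u * z u x * W x y * w u / (w u * z u x * (w u * ∑ x', z u x' * W x' y))
      = z u x * W x y / (z u x * ∑ x', z u x' * W x' y) := by
    field_simp
  rw [hratio]
  ring

theorem mutualInfo_mixture (w : U → ℝ) (z : U → X → ℝ) (W : X → Y → ℝ)
    (hw : ∀ u, 0 ≤ w u) (hz : ∀ u, z u ∈ stdSimplex ℝ X)
    (hW : ∀ x y, 0 ≤ W x y) (hWs : ∀ x, ∑ y, W x y = 1) :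
    mutualInfo (fun u y => ∑ x, w u * z u x * W x y)
      = mutualInfo (fun x y => (∑ u, w u • z u) x * W x y)
        - ∑ u, w u * mutualInfo (fun x y => z u x * W x y) := by
  rw [mutualInfo_eq_sub_condMutualInfo (fun u x => w u * z u x) W
      (fun u x => mul_nonneg (hw u) ((hz u).1 x)) hW hWs,
    condMutualInfo_eq_sum_mul_mutualInfo w z W hw (fun u => (hz u).2) hWs]
  simp only [Finset.sum_apply, Pi.smul_apply, smul_eq_mul]

/-- Y₂ is less noisy than Y₁ iff p ↦ I(X;Y₁) - I(X;Y₂) is convex on the input simplex. -/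
theorem stmt14 {m n₁ n₂ : ℕ} (W₁ : Fin m → Fin n₁ → ℝ) (W₂ : Fin m → Fin n₂ → ℝ)
    (hW₁ : ∀ x y, 0 ≤ W₁ x y) (hW₁s : ∀ x, ∑ y, W₁ x y = 1)
    (hW₂ : ∀ x y, 0 ≤ W₂ x y) (hW₂s : ∀ x, ∑ y, W₂ x y = 1) :
    (∀ (k : ℕ) (q : Fin k → Fin m → ℝ), (∀ u x, 0 ≤ q u x) → (∑ u, ∑ x, q u x) = 1 →
        mutualInfo (fun u y₁ => ∑ x, q u x * W₁ x y₁)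
          ≤ mutualInfo (fun u y₂ => ∑ x, q u x * W₂ x y₂)) ↔
    ConvexOn ℝ {p : Fin m → ℝ | (∀ x, 0 ≤ p x) ∧ ∑ x, p x = 1}
      (fun p => mutualInfo (fun x y₁ => p x * W₁ x y₁)
        - mutualInfo (fun x y₂ => p x * W₂ x y₂)) := by
  constructor
  · intro hless
    refine ⟨convex_stdSimplex ℝ (Fin m), fun p hp p' hp' a b ha hb hab => ?_⟩
    have hw : ∀ u, 0 ≤ ![a, b] u := Fin.forall_fin_two.2 ⟨ha, hb⟩
    have hz : ∀ u, ![p, p'] u ∈ stdSimplex ℝ (Fin m) := Fin.forall_fin_two.2 ⟨hp, hp'⟩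
    have hU := hless 2 (fun u x => ![a, b] u * ![p, p'] u x)
      (fun u x => mul_nonneg (hw u) ((hz u).1 x))
      (by simp [Fin.sum_univ_two, ← mul_sum, hp.2, hp'.2, hab])
    rw [mutualInfo_mixture _ _ _ hw hz hW₁ hW₁s, mutualInfo_mixture _ _ _ hw hz hW₂ hW₂s] at hU
    simp only [Fin.sum_univ_two, Matrix.cons_val_zero, Matrix.cons_val_one, smul_eq_mul] at hU ⊢
    linarith
  · intro hconv k q hq hmass
    have : Nonempty (Fin m) := by
      by_contra hX
      simp [not_nonempty_iff.1 hX] at hmass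
    obtain ⟨w, z, hw, hz, rfl⟩ := exists_mul_stdSimplex q hq
    have hw1 : ∑ u, w u = 1 := by simpa [← mul_sum, fun u => (hz u).2] using hmass
    have hjensen := hconv.map_sum_le (t := univ) (fun u _ => hw u) hw1 (fun u _ => hz u)
    simp only [smul_eq_mul, mul_sub, sum_sub_distrib] at hjensen
    rw [mutualInfo_mixture w z W₁ hw hz hW₁ hW₁s, mutualInfo_mixture w z W₂ hw hz hW₂ hW₂s]
    linarith
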